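/- If G is a square-stable graph with at least 2 vertices, then α(G) ≤ μ(G). -/

import Mathlib

open SimpleGraph

/-- The square of a graph: vertices adjacent iff at distance 1 or 2 in `G`. -/
def SimpleGraph.sq {V : Type*} (G : SimpleGraph V) : SimpleGraph V where
  Adj u v := G.Adj u v ∨ (u ≠ v ∧ ∃ w, G.Adj u w ∧ G.Adj w v)
  symm := by
    constructor
    rintro u v (h | ⟨hne, w, h1, h2⟩)
    · exact Or.inl h.symm
    · exact Or.inr ⟨hne.symm, w, h2.symm, h1.symm⟩
  loopless := by
    constructor
    rintro u (h | ⟨hne, _⟩)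
    · exact G.ne_of_adj h rfl
    · exact hne rfl

/-- A stable (independent) set of vertices. -/
def SimpleGraph.IsStableSet {V : Type*} (G : SimpleGraph V) (s : Set V) : Prop :=
  s.Pairwise fun u v => ¬ G.Adj u v

/-- The stability (independence) number. -/
noncomputable def SimpleGraph.alpha {V : Type*} (G : SimpleGraph V) : ℕ :=
  sSup {n | ∃ s : Finset V, G.IsStableSet ↑s ∧ s.card = n}

/-- The matching number: maximum number of edges in a matching. -/
noncomputable def SimpleGraph.mu {V : Type*} (G : SimpleGraph V) : ℕ :=
  sSup {n | ∃ M : G.Subgraph, M.IsMatching ∧ M.edgeSet.ncard = n}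

/-- `s` is a maximum stable set. -/
def SimpleGraph.IsMaximumStable {V : Type*} (G : SimpleGraph V) (s : Finset V) : Prop :=
  G.IsStableSet ↑s ∧ s.card = G.alpha

/-- `s` is a maximal stable set. -/
def SimpleGraph.IsMaximalStable {V : Type*} (G : SimpleGraph V) (s : Finset V) : Prop :=
  G.IsStableSet ↑s ∧ ∀ v ∉ s, ¬ G.IsStableSet (insert v (↑s : Set V))

/-- `G` is square-stable if `α(G) = α(G²)`. -/
def SimpleGraph.SquareStable {V : Type*} (G : SimpleGraph V) : Prop :=
  G.alpha = G.sq.alpha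

/-- König-Egerváry graph: `α(G) + μ(G) = |V(G)|`. -/
def SimpleGraph.KonigEgervary {V : Type*} [Fintype V] (G : SimpleGraph V) : Prop :=
  G.alpha + G.mu = Fintype.card V

/-- A pendant vertex: a vertex of degree 1. -/
def SimpleGraph.Pendant {V : Type*} (G : SimpleGraph V) (v : V) : Prop :=
  (G.neighborSet v).ncard = 1

/-- `G` has a perfect matching consisting of pendant edges. -/
def SimpleGraph.HasPendantPerfectMatching {V : Type*} (G : SimpleGraph V) : Prop :=
  ∃ M : G.Subgraph, M.IsPerfectMatching ∧ ∀ e ∈ M.edgeSet, ∃ v ∈ e, G.Pendant v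

/-- A simplicial vertex: its neighborhood induces a clique. -/
def SimpleGraph.IsSimplicial {V : Type*} (G : SimpleGraph V) (v : V) : Prop :=
  G.IsClique (G.neighborSet v)

/-- `G` is well-covered: every maximal stable set is maximum. -/
def SimpleGraph.WellCovered {V : Type*} (G : SimpleGraph V) : Prop :=
  ∀ s : Finset V, G.IsMaximalStable s → s.card = G.alpha

/-- `G` is very well-covered: well-covered, no isolated vertices, `|V| = 2α`. -/
def SimpleGraph.VeryWellCovered {V : Type*} [Fintype V] (G : SimpleGraph V) : Prop :=
  G.WellCovered ∧ (∀ v : V, (G.neighborSet v).ncard ≠ 0) ∧ Fintype.card V = 2 * G.alpha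

/-
A stable set `S` of `G²` consists of vertices pairwise at distance at least three in `G`. If no
vertex is isolated, pick a neighbour `f a` of each `a ∈ S`: two edges `a – f a` and `b – f b`
cannot share a vertex, since `a = f b` would make `a, b` adjacent and `f a = f b` would put them
at distance two. These edges form a matching of size `|S|`, so `α(G²) ≤ μ(G)` and square-stability
turns this into `α(G) ≤ μ(G)`.
-/

namespace SimpleGraph

variable {V : Type*} {G : SimpleGraph V}

lemma sq_adj_of_adj {u v : V} (h : G.Adj u v) : G.sq.Adj u v :=
  Or.inl h

lemma sq_adj_of_adj_of_adj {u v w : V} (hne : u ≠ v) (huw : G.Adj u w) (hwv : G.Adj w v) :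
    G.sq.Adj u v :=
  Or.inr ⟨hne, w, huw, hwv⟩

lemma IsStableSet.disjoint_of_sq {s : Set V} (hs : G.sq.IsStableSet s) {a b x y : V}
    (ha : a ∈ s) (hb : b ∈ s) (hab : a ≠ b) (hax : G.Adj a x) (hby : G.Adj b y) :
    Disjoint ({a, x} : Set V) {b, y} := by
  have hbx : b ≠ x := fun h => hs ha hb hab (sq_adj_of_adj (h ▸ hax))
  have hya : y ≠ a := fun h => hs ha hb hab (sq_adj_of_adj (h ▸ hby.symm))
  have hyx : y ≠ x := fun h => hs ha hb hab (sq_adj_of_adj_of_adj hab hax (h ▸ hby.symm))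
  simp [Set.disjoint_insert_right, hab.symm, hbx, hya, hyx]

lemma IsStableSet.exists_isMatching_ncard_edgeSet_eq_card_of_sq {s : Finset V}
    (hs : G.sq.IsStableSet s) (hadj : ∀ a ∈ s, ∃ w, G.Adj a w) :
    ∃ M : G.Subgraph, M.IsMatching ∧ M.edgeSet.ncard = s.card := by
  choose f hf using fun a : s => hadj a a.2
  refine ⟨⨆ a : s, G.subgraphOfAdj (hf a), ?_, ?_⟩
  · refine Subgraph.IsMatching.iSup (fun a => .subgraphOfAdj (hf a)) fun a b hab => ?_
    simp only [support_subgraphOfAdj]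
    exact hs.disjoint_of_sq a.2 b.2 (Subtype.coe_ne_coe.mpr hab) (hf a) (hf b)
  · have hinj : Function.Injective fun a : s => s(a.1, f a) := fun a b hab => by
      by_contra hne
      have hd := hs.disjoint_of_sq a.2 b.2 (Subtype.coe_ne_coe.mpr hne) (hf a) (hf b)
      rcases Sym2.eq_iff.mp hab with ⟨h, -⟩ | ⟨h, -⟩
      · exact hne (Subtype.ext h)
      · exact Set.disjoint_left.mp hd (Set.mem_insert _ _) (h ▸ Set.mem_insert_of_mem _ rfl)
    rw [Subgraph.edgeSet_iSup]
    simp only [edgeSet_subgraphOfAdj, Set.iUnion_singleton_eq_range]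
    rw [Set.ncard_range_of_injective hinj, Nat.card_eq_fintype_card, Fintype.card_coe]

section Finite

variable [Finite V]

lemma exists_isStableSet_card_eq_alpha (G : SimpleGraph V) :
    ∃ s : Finset V, G.IsStableSet s ∧ s.card = G.alpha := by
  have := Fintype.ofFinite V
  have hne : {n | ∃ s : Finset V, G.IsStableSet s ∧ s.card = n}.Nonempty :=
    ⟨0, ∅, by simp [IsStableSet], rfl⟩
  refine Nat.sSup_mem hne ⟨Fintype.card V, ?_⟩
  rintro n ⟨s, -, rfl⟩
  exact s.card_le_univ

lemma Subgraph.IsMatching.ncard_edgeSet_le_mu {M : G.Subgraph} (hM : M.IsMatching) :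
    M.edgeSet.ncard ≤ G.mu := by
  refine le_csSup ⟨Nat.card (Sym2 V), ?_⟩ ⟨M, hM, rfl⟩
  rintro n ⟨N, -, rfl⟩
  exact Set.ncard_le_card _

lemma alpha_sq_le_mu (hadj : ∀ v, ∃ w, G.Adj v w) : G.sq.alpha ≤ G.mu := by
  obtain ⟨s, hs, hcard⟩ := G.sq.exists_isStableSet_card_eq_alpha
  obtain ⟨M, hM, hMcard⟩ := hs.exists_isMatching_ncard_edgeSet_eq_card_of_sq fun a _ => hadj a
  exact hcard ▸ hMcard ▸ hM.ncard_edgeSet_le_mu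

end Finite

end SimpleGraph

theorem stmt15 {V : Type*} [Fintype V] (G : SimpleGraph V) (hc : G.Connected)
    (h2 : 2 ≤ Fintype.card V) (hss : G.SquareStable) :
    G.alpha ≤ G.mu := by
  have : Nontrivial V := Fintype.one_lt_card_iff_nontrivial.mp h2
  exact hss ▸ G.alpha_sq_le_mu hc.preconnected.exists_adj_of_nontrivial
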